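/- arXiv:1003.4534 — 8 statements merged into one kernel-verified Lean document; each statement's English description precedes it below -/
import Mathlib

section
/- A fuzzy set λ on a hemiring R is a fuzzy left h-ideal of R if and only if every non-empty level set U(λ;t) = {x ∈ R : λ(x) ≥ t} is a left h-ideal of R. -/
open Pointwise

def IsLeftHIdeal {R : Type*} [NonUnitalSemiring R] (I : Set R) : Prop :=
  I.Nonempty ∧ (∀ a ∈ I, ∀ b ∈ I, a + b ∈ I) ∧
    (∀ r : R, ∀ a ∈ I, r * a ∈ I) ∧
    (∀ a ∈ I, ∀ b ∈ I, ∀ x y : R, x + a + y = b + y → x ∈ I)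

def IsRightHIdeal {R : Type*} [NonUnitalSemiring R] (I : Set R) : Prop :=
  I.Nonempty ∧ (∀ a ∈ I, ∀ b ∈ I, a + b ∈ I) ∧
    (∀ r : R, ∀ a ∈ I, a * r ∈ I) ∧
    (∀ a ∈ I, ∀ b ∈ I, ∀ x y : R, x + a + y = b + y → x ∈ I)

def IsHIdeal {R : Type*} [NonUnitalSemiring R] (I : Set R) : Prop :=
  I.Nonempty ∧ (∀ a ∈ I, ∀ b ∈ I, a + b ∈ I) ∧
    (∀ r : R, ∀ a ∈ I, r * a ∈ I) ∧ (∀ r : R, ∀ a ∈ I, a * r ∈ I) ∧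
    (∀ a ∈ I, ∀ b ∈ I, ∀ x y : R, x + a + y = b + y → x ∈ I)

def hCl {R : Type*} [NonUnitalSemiring R] (A : Set R) : Set R :=
  {x | ∃ a ∈ A, ∃ b ∈ A, ∃ y : R, x + a + y = b + y}

def IsFuzzyLeftHIdeal {R : Type*} [NonUnitalSemiring R] (lam : R → ℝ) : Prop :=
  (∀ x : R, 0 ≤ lam x ∧ lam x ≤ 1) ∧
  (∀ a b : R, min (lam a) (lam b) ≤ lam (a + b)) ∧
  (∀ a b : R, lam b ≤ lam (a * b)) ∧
  (∀ a b x y : R, x + a + y = b + y → min (lam a) (lam b) ≤ lam x)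

def IsFuzzyHIdeal {R : Type*} [NonUnitalSemiring R] (lam : R → ℝ) : Prop :=
  (∀ x : R, 0 ≤ lam x ∧ lam x ≤ 1) ∧
  (∀ a b : R, min (lam a) (lam b) ≤ lam (a + b)) ∧
  (∀ a b : R, max (lam a) (lam b) ≤ lam (a * b)) ∧
  (∀ a b x y : R, x + a + y = b + y → min (lam a) (lam b) ≤ lam x)

theorem stmt_4 {R : Type*} [NonUnitalSemiring R] (lam : R → ℝ)
    (hrange : ∀ x : R, 0 ≤ lam x ∧ lam x ≤ 1) :
    IsFuzzyLeftHIdeal lam ↔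
      ∀ t : ℝ, 0 ≤ t → t ≤ 1 → ({x : R | t ≤ lam x}).Nonempty →
        IsLeftHIdeal {x : R | t ≤ lam x} := by
  constructor
  · rintro ⟨_, hadd, hmul, hh⟩ t _ _ hne
    refine ⟨hne, ?_, ?_, ?_⟩
    · intro a ha b hb
      exact le_trans (le_min ha hb) (hadd a b)
    · intro r a ha
      exact le_trans ha (hmul r a)
    · intro a ha b hb x y hxy
      exact le_trans (le_min ha hb) (hh a b x y hxy)
  · intro H
    refine ⟨hrange, ?_, ?_, ?_⟩
    · intro a b
      set t := min (lam a) (lam b) with ht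
      have h0 : 0 ≤ t := le_min (hrange a).1 (hrange b).1
      have h1 : t ≤ 1 := le_trans (min_le_left _ _) (hrange a).2
      have ha : a ∈ {x : R | t ≤ lam x} := by simp only [Set.mem_setOf_eq]; exact min_le_left _ _
      have hb : b ∈ {x : R | t ≤ lam x} := by simp only [Set.mem_setOf_eq]; exact min_le_right _ _
      exact (H t h0 h1 ⟨a, ha⟩).2.1 a ha b hb
    · intro a b
      have hb : b ∈ {x : R | lam b ≤ lam x} := by simp only [Set.mem_setOf_eq]; exact le_refl _
      exact (H (lam b) (hrange b).1 (hrange b).2 ⟨b, hb⟩).2.2.1 a b hb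
    · intro a b x y hxy
      set t := min (lam a) (lam b) with ht
      have h0 : 0 ≤ t := le_min (hrange a).1 (hrange b).1
      have h1 : t ≤ 1 := le_trans (min_le_left _ _) (hrange a).2
      have ha : a ∈ {x : R | t ≤ lam x} := by simp only [Set.mem_setOf_eq]; exact min_le_left _ _
      have hb : b ∈ {x : R | t ≤ lam x} := by simp only [Set.mem_setOf_eq]; exact min_le_right _ _
      exact (H t h0 h1 ⟨a, ha⟩).2.2.2 a ha b hb x y hxy
end

section
/- If λ and μ are fuzzy h-ideals of a hemiring R, then their h-intrinsic product λ ⊙_h μ is also a fuzzy h-ideal of R, and moreover λ ⊙_h μ ≤ min(λ, μ) pointwise. -/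
open Pointwise

noncomputable def hIntrinsicProd {R : Type*} [NonUnitalSemiring R] (lam mu : R → ℝ) : R → ℝ :=
  fun x => sSup ({0} ∪ {v : ℝ | ∃ (m n : ℕ) (a b : Fin (m + 1) → R) (c d : Fin (n + 1) → R)
    (z : R), x + (∑ i, a i * b i) + z = (∑ j, c j * d j) + z ∧
      v = min (Finset.univ.inf' Finset.univ_nonempty (fun i => min (lam (a i)) (mu (b i))))
              (Finset.univ.inf' Finset.univ_nonempty (fun j => min (lam (c j)) (mu (d j))))})

section Helpers
variable {R : Type*} [NonUnitalSemiring R]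

instance fin_add_nonempty (m m' : ℕ) : Nonempty (Fin (m + 1 + (m' + 1))) := ⟨⟨0, by omega⟩⟩

def hRepSet (lam mu : R → ℝ) (x : R) : Set ℝ :=
  {v : ℝ | ∃ (m n : ℕ) (a b : Fin (m + 1) → R) (c d : Fin (n + 1) → R)
    (z : R), x + (∑ i, a i * b i) + z = (∑ j, c j * d j) + z ∧
      v = min (Finset.univ.inf' Finset.univ_nonempty (fun i => min (lam (a i)) (mu (b i))))
              (Finset.univ.inf' Finset.univ_nonempty (fun j => min (lam (c j)) (mu (d j))))}

lemma hSet_ne (lam mu : R → ℝ) (x : R) : ({0} ∪ hRepSet lam mu x).Nonempty :=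
  ⟨0, Set.mem_union_left _ rfl⟩

lemma hProd_eq (lam mu : R → ℝ) (x : R) :
    hIntrinsicProd lam mu x = sSup ({0} ∪ hRepSet lam mu x) := rfl

lemma key_sum (κ : R → ℝ) (hκ : ∀ a b : R, min (κ a) (κ b) ≤ κ (a + b)) :
    ∀ (n : ℕ) (g : Fin (n + 1) → R),
      (Finset.univ.inf' Finset.univ_nonempty fun i => κ (g i)) ≤ κ (∑ i, g i) := by
  intro n
  induction n with
  | zero =>
    intro g
    have := Finset.inf'_le (fun i => κ (g i)) (Finset.mem_univ (0 : Fin 1))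
    simpa using this
  | succ n ih =>
    intro g
    rw [Fin.sum_univ_succ]
    refine le_trans (le_min ?_ ?_) (hκ _ _)
    · exact Finset.inf'_le _ (Finset.mem_univ 0)
    · exact le_trans (Finset.le_inf' _ _ fun i _ => Finset.inf'_le _ (Finset.mem_univ i.succ)) (ih _)

lemma nu_fhi {lam mu : R → ℝ} (hlam : IsFuzzyHIdeal lam) (hmu : IsFuzzyHIdeal mu) :
    IsFuzzyHIdeal (fun x => min (lam x) (mu x)) := by
  obtain ⟨h01, hadd, hmul, hh⟩ := hlam
  obtain ⟨h01', hadd', hmul', hh'⟩ := hmu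
  refine ⟨fun x => ⟨le_min (h01 x).1 (h01' x).1, min_le_of_left_le (h01 x).2⟩, ?_, ?_, ?_⟩
  · intro a b
    refine le_min (le_trans ?_ (hadd a b)) (le_trans ?_ (hadd' a b))
    · exact min_le_min (min_le_left _ _) (min_le_left _ _)
    · exact min_le_min (min_le_right _ _) (min_le_right _ _)
  · intro a b
    refine max_le (le_min ?_ ?_) (le_min ?_ ?_)
    · exact le_trans (min_le_left _ _) (le_trans (le_max_left _ _) (hmul a b))
    · exact le_trans (min_le_right _ _) (le_trans (le_max_left _ _) (hmul' a b))
    · exact le_trans (min_le_left _ _) (le_trans (le_max_right _ _) (hmul a b))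
    · exact le_trans (min_le_right _ _) (le_trans (le_max_right _ _) (hmul' a b))
  · intro a b x y hxy
    refine le_min (le_trans ?_ (hh a b x y hxy)) (le_trans ?_ (hh' a b x y hxy))
    · exact min_le_min (min_le_left _ _) (min_le_left _ _)
    · exact min_le_min (min_le_right _ _) (min_le_right _ _)

lemma rep_le {lam mu : R → ℝ} (hlam : IsFuzzyHIdeal lam) (hmu : IsFuzzyHIdeal mu)
    {x : R} {v : ℝ} (hv : v ∈ hRepSet lam mu x) : v ≤ min (lam x) (mu x) := by
  obtain ⟨m, n, a, b, c, d, z, heq, rfl⟩ := hv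
  have hnui := nu_fhi hlam hmu
  have hterm : ∀ (k : ℕ) (p q : Fin (k + 1) → R),
      (Finset.univ.inf' Finset.univ_nonempty fun i => min (lam (p i)) (mu (q i)))
        ≤ min (lam (∑ i, p i * q i)) (mu (∑ i, p i * q i)) := by
    intro k p q
    refine le_trans (Finset.le_inf' _ _ fun i _ => le_trans (Finset.inf'_le _ (Finset.mem_univ i)) ?_)
      (key_sum _ hnui.2.1 k (fun i => p i * q i))
    refine le_min ?_ ?_
    · exact le_trans (min_le_left _ _) (le_trans (le_max_left _ _) (hlam.2.2.1 _ _))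
    · exact le_trans (min_le_right _ _) (le_trans (le_max_right _ _) (hmu.2.2.1 _ _))
  refine le_trans (le_min ?_ ?_) (hnui.2.2.2 _ _ x z heq)
  · exact le_trans (min_le_left _ _) (hterm m a b)
  · exact le_trans (min_le_right _ _) (hterm n c d)

lemma hSet_bdd {lam mu : R → ℝ} (hlam : IsFuzzyHIdeal lam) (hmu : IsFuzzyHIdeal mu) (x : R) :
    BddAbove ({0} ∪ hRepSet lam mu x) := by
  refine ⟨min (lam x) (mu x), ?_⟩
  rintro v (hv | hv)
  · simp only [Set.mem_singleton_iff] at hv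
    subst hv
    exact le_min (hlam.1 x).1 (hmu.1 x).1
  · exact rep_le hlam hmu hv

lemma rep_le_P {lam mu : R → ℝ} (hlam : IsFuzzyHIdeal lam) (hmu : IsFuzzyHIdeal mu)
    {x : R} {v : ℝ} (hv : v ∈ hRepSet lam mu x) : v ≤ hIntrinsicProd lam mu x :=
  le_csSup (hSet_bdd hlam hmu x) (Set.mem_union_right _ hv)

lemma P_nonneg {lam mu : R → ℝ} (hlam : IsFuzzyHIdeal lam) (hmu : IsFuzzyHIdeal mu) (x : R) :
    0 ≤ hIntrinsicProd lam mu x :=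
  le_csSup (hSet_bdd hlam hmu x) (Set.mem_union_left _ rfl)

lemma P_le {lam mu : R → ℝ} (hlam : IsFuzzyHIdeal lam) (hmu : IsFuzzyHIdeal mu) (x : R) :
    hIntrinsicProd lam mu x ≤ min (lam x) (mu x) := by
  refine csSup_le (hSet_ne lam mu x) ?_
  rintro v (hv | hv)
  · simp only [Set.mem_singleton_iff] at hv
    subst hv
    exact le_min (hlam.1 x).1 (hmu.1 x).1
  · exact rep_le hlam hmu hv

lemma min_P_le {lam mu : R → ℝ} (hlam : IsFuzzyHIdeal lam) (hmu : IsFuzzyHIdeal mu)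
    {a b : R} {M : ℝ} (hM0 : 0 ≤ M)
    (h : ∀ va ∈ hRepSet lam mu a, ∀ vb ∈ hRepSet lam mu b, min va vb ≤ M) :
    min (hIntrinsicProd lam mu a) (hIntrinsicProd lam mu b) ≤ M := by
  by_contra hc
  push_neg at hc
  have ha : M < sSup ({0} ∪ hRepSet lam mu a) := lt_of_lt_of_le hc (min_le_left _ _)
  have hb : M < sSup ({0} ∪ hRepSet lam mu b) := lt_of_lt_of_le hc (min_le_right _ _)
  obtain ⟨va, hva, hMa⟩ := exists_lt_of_lt_csSup (hSet_ne lam mu a) ha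
  obtain ⟨vb, hvb, hMb⟩ := exists_lt_of_lt_csSup (hSet_ne lam mu b) hb
  rcases hva with hva | hva
  · simp only [Set.mem_singleton_iff] at hva; subst hva; exact absurd hMa hM0.not_gt
  rcases hvb with hvb | hvb
  · simp only [Set.mem_singleton_iff] at hvb; subst hvb; exact absurd hMb hM0.not_gt
  exact absurd (h va hva vb hvb) (not_le.mpr (lt_min hMa hMb))

lemma append_sum {m m' : ℕ} (a b : Fin (m + 1) → R) (a' b' : Fin (m' + 1) → R) :
    (∑ i : Fin ((m + 1) + (m' + 1)), Fin.append a a' i * Fin.append b b' i)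
      = (∑ i, a i * b i) + (∑ i, a' i * b' i) := by
  rw [Fin.sum_univ_add]
  simp [Fin.append_left, Fin.append_right]

lemma append_min_le {lam mu : R → ℝ} {m m' : ℕ} (a b : Fin (m + 1) → R) (a' b' : Fin (m' + 1) → R)
    {t : ℝ}
    (h1 : t ≤ Finset.univ.inf' Finset.univ_nonempty (fun i => min (lam (a i)) (mu (b i))))
    (h2 : t ≤ Finset.univ.inf' Finset.univ_nonempty (fun i => min (lam (a' i)) (mu (b' i)))) :
    t ≤ Finset.univ.inf' Finset.univ_nonempty
      (fun i : Fin ((m + 1) + (m' + 1)) => min (lam (Fin.append a a' i)) (mu (Fin.append b b' i))) := by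
  refine Finset.le_inf' _ _ fun i _ => ?_
  refine Fin.addCases (motive := fun i => t ≤ min (lam (Fin.append a a' i)) (mu (Fin.append b b' i))) ?_ ?_ i
  · intro i
    rw [Fin.append_left, Fin.append_left]
    exact le_trans h1 (Finset.inf'_le _ (Finset.mem_univ i))
  · intro i
    rw [Fin.append_right, Fin.append_right]
    exact le_trans h2 (Finset.inf'_le _ (Finset.mem_univ i))

end Helpers

section Main
variable {R : Type*} [NonUnitalSemiring R]

lemma P_add {lam mu : R → ℝ} (hlam : IsFuzzyHIdeal lam) (hmu : IsFuzzyHIdeal mu) (a b : R) :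
    min (hIntrinsicProd lam mu a) (hIntrinsicProd lam mu b) ≤ hIntrinsicProd lam mu (a + b) := by
  refine min_P_le hlam hmu (P_nonneg hlam hmu _) ?_
  rintro va ⟨m1, n1, a1, b1, c1, d1, z1, heq1, rfl⟩ vb ⟨m2, n2, a2, b2, c2, d2, z2, heq2, rfl⟩
  have hEq : (a + b) + (∑ i : Fin ((m1+1)+(m2+1)), Fin.append a1 a2 i * Fin.append b1 b2 i) + (z1 + z2)
      = (∑ j : Fin ((n1+1)+(n2+1)), Fin.append c1 c2 j * Fin.append d1 d2 j) + (z1 + z2) := by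
    rw [append_sum, append_sum]
    calc (a + b) + ((∑ i, a1 i * b1 i) + (∑ i, a2 i * b2 i)) + (z1 + z2)
        = (a + (∑ i, a1 i * b1 i) + z1) + (b + (∑ i, a2 i * b2 i) + z2) := by abel
      _ = ((∑ j, c1 j * d1 j) + z1) + ((∑ j, c2 j * d2 j) + z2) := by rw [heq1, heq2]
      _ = ((∑ j, c1 j * d1 j) + (∑ j, c2 j * d2 j)) + (z1 + z2) := by abel
  have hmem : min
      (Finset.univ.inf' Finset.univ_nonempty
        (fun i : Fin ((m1+1)+(m2+1)) => min (lam (Fin.append a1 a2 i)) (mu (Fin.append b1 b2 i))))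
      (Finset.univ.inf' Finset.univ_nonempty
        (fun j : Fin ((n1+1)+(n2+1)) => min (lam (Fin.append c1 c2 j)) (mu (Fin.append d1 d2 j))))
      ∈ hRepSet lam mu (a + b) :=
    ⟨m1+1+m2, n1+1+n2, (Fin.append a1 a2 : Fin ((m1+1)+(m2+1)) → R),
      (Fin.append b1 b2 : Fin ((m1+1)+(m2+1)) → R),
      (Fin.append c1 c2 : Fin ((n1+1)+(n2+1)) → R),
      (Fin.append d1 d2 : Fin ((n1+1)+(n2+1)) → R),
      z1 + z2, hEq, rfl⟩
  refine le_trans (le_min ?_ ?_) (rep_le_P hlam hmu hmem)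
  · exact append_min_le _ _ _ _ (le_trans (min_le_left _ _) (min_le_left _ _))
      (le_trans (min_le_right _ _) (min_le_left _ _))
  · exact append_min_le _ _ _ _ (le_trans (min_le_left _ _) (min_le_right _ _))
      (le_trans (min_le_right _ _) (min_le_right _ _))

lemma P_le_mul_left {lam mu : R → ℝ} (hlam : IsFuzzyHIdeal lam) (hmu : IsFuzzyHIdeal mu) (r x : R) :
    hIntrinsicProd lam mu x ≤ hIntrinsicProd lam mu (r * x) := by
  rw [hProd_eq lam mu x]
  refine csSup_le (hSet_ne lam mu x) ?_
  rintro v (hv | hv)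
  · simp only [Set.mem_singleton_iff] at hv; subst hv; exact P_nonneg hlam hmu _
  · obtain ⟨m, n, a, b, c, d, z, heq, rfl⟩ := hv
    have hEq : r * x + (∑ i, (r * a i) * b i) + r * z = (∑ j, (r * c j) * d j) + r * z := by
      have := congrArg (fun w => r * w) heq
      simpa [mul_add, Finset.mul_sum, mul_assoc] using this
    have hmem : min
        (Finset.univ.inf' Finset.univ_nonempty (fun i => min (lam (r * a i)) (mu (b i))))
        (Finset.univ.inf' Finset.univ_nonempty (fun j => min (lam (r * c j)) (mu (d j))))
        ∈ hRepSet lam mu (r * x) :=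
      ⟨m, n, fun i => r * a i, b, fun j => r * c j, d, r * z, hEq, rfl⟩
    refine le_trans (le_min ?_ ?_) (rep_le_P hlam hmu hmem)
    · exact le_trans (min_le_left _ _) (Finset.le_inf' _ _ fun i _ =>
        le_trans (Finset.inf'_le _ (Finset.mem_univ i))
          (min_le_min (le_trans (le_max_right _ _) (hlam.2.2.1 r (a i))) le_rfl))
    · exact le_trans (min_le_right _ _) (Finset.le_inf' _ _ fun j _ =>
        le_trans (Finset.inf'_le _ (Finset.mem_univ j))
          (min_le_min (le_trans (le_max_right _ _) (hlam.2.2.1 r (c j))) le_rfl))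

lemma P_le_mul_right {lam mu : R → ℝ} (hlam : IsFuzzyHIdeal lam) (hmu : IsFuzzyHIdeal mu) (x r : R) :
    hIntrinsicProd lam mu x ≤ hIntrinsicProd lam mu (x * r) := by
  rw [hProd_eq lam mu x]
  refine csSup_le (hSet_ne lam mu x) ?_
  rintro v (hv | hv)
  · simp only [Set.mem_singleton_iff] at hv; subst hv; exact P_nonneg hlam hmu _
  · obtain ⟨m, n, a, b, c, d, z, heq, rfl⟩ := hv
    have hEq : x * r + (∑ i, a i * (b i * r)) + z * r = (∑ j, c j * (d j * r)) + z * r := by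
      have := congrArg (fun w => w * r) heq
      simpa [add_mul, Finset.sum_mul, mul_assoc] using this
    have hmem : min
        (Finset.univ.inf' Finset.univ_nonempty (fun i => min (lam (a i)) (mu (b i * r))))
        (Finset.univ.inf' Finset.univ_nonempty (fun j => min (lam (c j)) (mu (d j * r))))
        ∈ hRepSet lam mu (x * r) :=
      ⟨m, n, a, fun i => b i * r, c, fun j => d j * r, z * r, hEq, rfl⟩
    refine le_trans (le_min ?_ ?_) (rep_le_P hlam hmu hmem)
    · exact le_trans (min_le_left _ _) (Finset.le_inf' _ _ fun i _ =>
        le_trans (Finset.inf'_le _ (Finset.mem_univ i))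
          (min_le_min le_rfl (le_trans (le_max_left _ _) (hmu.2.2.1 (b i) r))))
    · exact le_trans (min_le_right _ _) (Finset.le_inf' _ _ fun j _ =>
        le_trans (Finset.inf'_le _ (Finset.mem_univ j))
          (min_le_min le_rfl (le_trans (le_max_left _ _) (hmu.2.2.1 (d j) r))))

lemma P_h {lam mu : R → ℝ} (hlam : IsFuzzyHIdeal lam) (hmu : IsFuzzyHIdeal mu)
    (a b x y : R) (hxy : x + a + y = b + y) :
    min (hIntrinsicProd lam mu a) (hIntrinsicProd lam mu b) ≤ hIntrinsicProd lam mu x := by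
  refine min_P_le hlam hmu (P_nonneg hlam hmu _) ?_
  rintro va ⟨m1, n1, a1, b1, c1, d1, z1, heq1, rfl⟩ vb ⟨m2, n2, a2, b2, c2, d2, z2, heq2, rfl⟩
  have hEq0 : x + ((∑ j, c1 j * d1 j) + (∑ i, a2 i * b2 i))
        + (z1 + z2 + y + a + (∑ i, a2 i * b2 i))
      = ((∑ i, a1 i * b1 i) + (∑ j, c2 j * d2 j))
        + (z1 + z2 + y + a + (∑ i, a2 i * b2 i)) := by
    set S1 := ∑ i, a1 i * b1 i
    set T1 := ∑ j, c1 j * d1 j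
    set S2 := ∑ i, a2 i * b2 i
    set T2 := ∑ j, c2 j * d2 j
    calc x + (T1 + S2) + (z1 + z2 + y + a + S2)
        = (T1 + z1) + ((x + a + y) + (S2 + z2) + S2) := by abel
      _ = (a + S1 + z1) + ((x + a + y) + (S2 + z2) + S2) := by rw [heq1]
      _ = (a + S1 + z1) + ((b + y) + (S2 + z2) + S2) := by rw [hxy]
      _ = (b + S2 + z2) + (a + S1 + z1 + y + S2) := by abel
      _ = (T2 + z2) + (a + S1 + z1 + y + S2) := by rw [heq2]
      _ = (S1 + T2) + (z1 + z2 + y + a + S2) := by abel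
  have hEq : x + (∑ i : Fin ((n1+1)+(m2+1)), Fin.append c1 a2 i * Fin.append d1 b2 i)
        + (z1 + z2 + y + a + (∑ i, a2 i * b2 i))
      = (∑ j : Fin ((m1+1)+(n2+1)), Fin.append a1 c2 j * Fin.append b1 d2 j)
        + (z1 + z2 + y + a + (∑ i, a2 i * b2 i)) := by
    rw [append_sum, append_sum]; exact hEq0
  have hmem : min
      (Finset.univ.inf' Finset.univ_nonempty
        (fun i : Fin ((n1+1)+(m2+1)) => min (lam (Fin.append c1 a2 i)) (mu (Fin.append d1 b2 i))))
      (Finset.univ.inf' Finset.univ_nonempty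
        (fun j : Fin ((m1+1)+(n2+1)) => min (lam (Fin.append a1 c2 j)) (mu (Fin.append b1 d2 j))))
      ∈ hRepSet lam mu x :=
    ⟨n1+1+m2, m1+1+n2, (Fin.append c1 a2 : Fin ((n1+1)+(m2+1)) → R),
      (Fin.append d1 b2 : Fin ((n1+1)+(m2+1)) → R),
      (Fin.append a1 c2 : Fin ((m1+1)+(n2+1)) → R),
      (Fin.append b1 d2 : Fin ((m1+1)+(n2+1)) → R),
      z1 + z2 + y + a + (∑ i, a2 i * b2 i), hEq, rfl⟩
  refine le_trans (le_min ?_ ?_) (rep_le_P hlam hmu hmem)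
  · exact append_min_le _ _ _ _ (le_trans (min_le_left _ _) (min_le_right _ _))
      (le_trans (min_le_right _ _) (min_le_left _ _))
  · exact append_min_le _ _ _ _ (le_trans (min_le_left _ _) (min_le_left _ _))
      (le_trans (min_le_right _ _) (min_le_right _ _))

end Main


theorem stmt_7 {R : Type*} [NonUnitalSemiring R] (lam mu : R → ℝ)
    (hlam : IsFuzzyHIdeal lam) (hmu : IsFuzzyHIdeal mu) :
    IsFuzzyHIdeal (hIntrinsicProd lam mu) ∧
      ∀ x : R, hIntrinsicProd lam mu x ≤ min (lam x) (mu x) := by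
  refine ⟨⟨fun x => ⟨P_nonneg hlam hmu x,
      le_trans (P_le hlam hmu x) (le_trans (min_le_left _ _) (hlam.1 x).2)⟩,
    P_add hlam hmu,
    fun a b => max_le (P_le_mul_right hlam hmu a b) (P_le_mul_left hlam hmu a b),
    fun a b x y hxy => P_h hlam hmu a b x y hxy⟩,
    fun x => P_le hlam hmu x⟩
end

section
/- If λ and μ are fuzzy h-ideals of a hemiring R, then their h-sum λ +_h μ is also a fuzzy h-ideal of R. -/
open Pointwise

noncomputable def hSum {R : Type*} [NonUnitalSemiring R] (lam mu : R → ℝ) : R → ℝ :=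
  fun x => sSup {v : ℝ | ∃ a₁ b₁ a₂ b₂ z : R, x + (a₁ + b₁) + z = (a₂ + b₂) + z ∧
    v = min (min (lam a₁) (lam a₂)) (min (mu b₁) (mu b₂))}


namespace Stmt8Aux

variable {R : Type*} [NonUnitalSemiring R]

def S (lam mu : R → ℝ) (x : R) : Set ℝ :=
  {v : ℝ | ∃ a₁ b₁ a₂ b₂ z : R, x + (a₁ + b₁) + z = (a₂ + b₂) + z ∧
    v = min (min (lam a₁) (lam a₂)) (min (mu b₁) (mu b₂))}

lemma hSum_eq (lam mu : R → ℝ) (x : R) : hSum lam mu x = sSup (S lam mu x) := rfl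

lemma S_nonempty (lam mu : R → ℝ) (x : R) : (S lam mu x).Nonempty :=
  ⟨_, x, x, x + x, x, x, by abel, rfl⟩

lemma mem_bounds {lam mu : R → ℝ} (hlam : IsFuzzyHIdeal lam) (hmu : IsFuzzyHIdeal mu)
    {x : R} {v : ℝ} (h : v ∈ S lam mu x) : 0 ≤ v ∧ v ≤ 1 := by
  obtain ⟨a₁, b₁, a₂, b₂, z, _, rfl⟩ := h
  refine ⟨le_min (le_min (hlam.1 a₁).1 (hlam.1 a₂).1) (le_min (hmu.1 b₁).1 (hmu.1 b₂).1), ?_⟩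
  exact le_trans (min_le_left _ _) (le_trans (min_le_left _ _) (hlam.1 a₁).2)

lemma S_bdd {lam mu : R → ℝ} (hlam : IsFuzzyHIdeal lam) (hmu : IsFuzzyHIdeal mu) (x : R) :
    BddAbove (S lam mu x) := ⟨1, fun _ hv => (mem_bounds hlam hmu hv).2⟩

end Stmt8Aux

theorem stmt_8 {R : Type*} [NonUnitalSemiring R] (lam mu : R → ℝ)
    (hlam : IsFuzzyHIdeal lam) (hmu : IsFuzzyHIdeal mu) :
    IsFuzzyHIdeal (hSum lam mu) := by
  open Stmt8Aux in
  obtain ⟨hl1, hl2, hl3, hl4⟩ := id hlam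
  obtain ⟨hm1, hm2, hm3, hm4⟩ := id hmu
  have hne := S_nonempty lam mu
  have hbdd := S_bdd hlam hmu
  have hb : ∀ x : R, ∀ v ∈ S lam mu x, 0 ≤ v ∧ v ≤ 1 :=
    fun x v hv => mem_bounds hlam hmu hv
  have h01 : ∀ x : R, 0 ≤ hSum lam mu x ∧ hSum lam mu x ≤ 1 := by
    intro x
    obtain ⟨v, hv⟩ := hne x
    constructor
    · exact le_trans (hb x v hv).1 (le_csSup (hbdd x) hv)
    · exact Real.sSup_le (fun w hw => (hb x w hw).2) zero_le_one
  refine ⟨h01, ?_, ?_, ?_⟩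
  · -- addition
    intro a b
    by_contra hcon
    push_neg at hcon
    rw [hSum_eq] at hcon
    obtain ⟨v, hv, hvlt⟩ := exists_lt_of_lt_csSup (hne a) (lt_of_lt_of_le hcon (min_le_left _ _))
    obtain ⟨w, hw, hwlt⟩ := exists_lt_of_lt_csSup (hne b) (lt_of_lt_of_le hcon (min_le_right _ _))
    obtain ⟨a₁, b₁, a₂, b₂, z, heq1, rfl⟩ := hv
    obtain ⟨c₁, d₁, c₂, d₂, z', heq2, rfl⟩ := hw
    have hu : min (min (lam (a₁ + c₁)) (lam (a₂ + c₂)))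
        (min (mu (b₁ + d₁)) (mu (b₂ + d₂))) ∈ S lam mu (a + b) := by
      refine ⟨a₁ + c₁, b₁ + d₁, a₂ + c₂, b₂ + d₂, z + z', ?_, rfl⟩
      calc (a + b) + ((a₁ + c₁) + (b₁ + d₁)) + (z + z')
          = (a + (a₁ + b₁) + z) + (b + (c₁ + d₁) + z') := by abel
        _ = ((a₂ + b₂) + z) + ((c₂ + d₂) + z') := by rw [heq1, heq2]
        _ = ((a₂ + c₂) + (b₂ + d₂)) + (z + z') := by abel
    have hle : min (min (min (lam a₁) (lam a₂)) (min (mu b₁) (mu b₂)))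
        (min (min (lam c₁) (lam c₂)) (min (mu d₁) (mu d₂))) ≤
        min (min (lam (a₁ + c₁)) (lam (a₂ + c₂))) (min (mu (b₁ + d₁)) (mu (b₂ + d₂))) := by
      refine le_min (le_min ?_ ?_) (le_min ?_ ?_)
      · exact le_trans (le_min (by simp [min_le_iff]) (by simp [min_le_iff])) (hl2 a₁ c₁)
      · exact le_trans (le_min (by simp [min_le_iff]) (by simp [min_le_iff])) (hl2 a₂ c₂)
      · exact le_trans (le_min (by simp [min_le_iff]) (by simp [min_le_iff])) (hm2 b₁ d₁)
      · exact le_trans (le_min (by simp [min_le_iff]) (by simp [min_le_iff])) (hm2 b₂ d₂)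
    have : sSup (S lam mu (a + b)) < sSup (S lam mu (a + b)) :=
      lt_of_lt_of_le (lt_of_lt_of_le (lt_min hvlt hwlt) hle) (le_csSup (hbdd _) hu)
    exact absurd this (lt_irrefl _)
  · -- multiplication
    intro a b
    refine max_le ?_ ?_
    · rw [hSum_eq]
      refine Real.sSup_le (fun v hv => ?_) (h01 _).1
      obtain ⟨a₁, b₁, a₂, b₂, z, heq1, rfl⟩ := hv
      have hu : min (min (lam (a₁ * b)) (lam (a₂ * b)))
          (min (mu (b₁ * b)) (mu (b₂ * b))) ∈ S lam mu (a * b) := by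
        refine ⟨a₁ * b, b₁ * b, a₂ * b, b₂ * b, z * b, ?_, rfl⟩
        have := congrArg (· * b) heq1
        simpa only [add_mul] using this
      refine le_trans ?_ (le_csSup (hbdd _) hu)
      refine le_min (le_min ?_ ?_) (le_min ?_ ?_)
      · exact le_trans (by simp [min_le_iff]) (le_trans (le_max_left _ _) (hl3 a₁ b))
      · exact le_trans (by simp [min_le_iff]) (le_trans (le_max_left _ _) (hl3 a₂ b))
      · exact le_trans (by simp [min_le_iff]) (le_trans (le_max_left _ _) (hm3 b₁ b))
      · exact le_trans (by simp [min_le_iff]) (le_trans (le_max_left _ _) (hm3 b₂ b))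
    · rw [hSum_eq]
      refine Real.sSup_le (fun v hv => ?_) (h01 _).1
      obtain ⟨a₁, b₁, a₂, b₂, z, heq1, rfl⟩ := hv
      have hu : min (min (lam (a * a₁)) (lam (a * a₂)))
          (min (mu (a * b₁)) (mu (a * b₂))) ∈ S lam mu (a * b) := by
        refine ⟨a * a₁, a * b₁, a * a₂, a * b₂, a * z, ?_, rfl⟩
        have := congrArg (a * ·) heq1
        simpa only [mul_add] using this
      refine le_trans ?_ (le_csSup (hbdd _) hu)
      refine le_min (le_min ?_ ?_) (le_min ?_ ?_)
      · exact le_trans (by simp [min_le_iff]) (le_trans (le_max_right _ _) (hl3 a a₁))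
      · exact le_trans (by simp [min_le_iff]) (le_trans (le_max_right _ _) (hl3 a a₂))
      · exact le_trans (by simp [min_le_iff]) (le_trans (le_max_right _ _) (hm3 a b₁))
      · exact le_trans (by simp [min_le_iff]) (le_trans (le_max_right _ _) (hm3 a b₂))
  · -- h-condition
    intro a b x y hxy
    by_contra hcon
    push_neg at hcon
    rw [hSum_eq] at hcon
    obtain ⟨v, hv, hvlt⟩ := exists_lt_of_lt_csSup (hne a) (lt_of_lt_of_le hcon (min_le_left _ _))
    obtain ⟨w, hw, hwlt⟩ := exists_lt_of_lt_csSup (hne b) (lt_of_lt_of_le hcon (min_le_right _ _))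
    obtain ⟨a₁, b₁, a₂, b₂, z, heq1, rfl⟩ := hv
    obtain ⟨c₁, d₁, c₂, d₂, z', heq2, rfl⟩ := hw
    have hu : min (min (lam (a₂ + c₁)) (lam (c₂ + a₁)))
        (min (mu (b₂ + d₁)) (mu (d₂ + b₁))) ∈ S lam mu x := by
      refine ⟨a₂ + c₁, b₂ + d₁, c₂ + a₁, d₂ + b₁, z + z' + y, ?_, rfl⟩
      calc x + ((a₂ + c₁) + (b₂ + d₁)) + (z + z' + y)
          = x + ((a₂ + b₂) + z) + ((c₁ + d₁) + z') + y := by abel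
        _ = x + (a + (a₁ + b₁) + z) + ((c₁ + d₁) + z') + y := by rw [heq1]
        _ = (x + a + y) + ((a₁ + b₁) + z) + ((c₁ + d₁) + z') := by abel
        _ = (b + y) + ((a₁ + b₁) + z) + ((c₁ + d₁) + z') := by rw [hxy]
        _ = (b + (c₁ + d₁) + z') + ((a₁ + b₁) + z) + y := by abel
        _ = ((c₂ + d₂) + z') + ((a₁ + b₁) + z) + y := by rw [heq2]
        _ = ((c₂ + a₁) + (d₂ + b₁)) + (z + z' + y) := by abel
    have hle : min (min (min (lam a₁) (lam a₂)) (min (mu b₁) (mu b₂)))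
        (min (min (lam c₁) (lam c₂)) (min (mu d₁) (mu d₂))) ≤
        min (min (lam (a₂ + c₁)) (lam (c₂ + a₁))) (min (mu (b₂ + d₁)) (mu (d₂ + b₁))) := by
      refine le_min (le_min ?_ ?_) (le_min ?_ ?_)
      · exact le_trans (le_min (by simp [min_le_iff]) (by simp [min_le_iff])) (hl2 a₂ c₁)
      · exact le_trans (le_min (by simp [min_le_iff]) (by simp [min_le_iff])) (hl2 c₂ a₁)
      · exact le_trans (le_min (by simp [min_le_iff]) (by simp [min_le_iff])) (hm2 b₂ d₁)
      · exact le_trans (le_min (by simp [min_le_iff]) (by simp [min_le_iff])) (hm2 d₂ b₁)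
    have : sSup (S lam mu x) < sSup (S lam mu x) :=
      lt_of_lt_of_le (lt_of_lt_of_le (lt_min hvlt hwlt) hle) (le_csSup (hbdd _) hu)
    exact absurd this (lt_irrefl _)
end

section
/- In a hemiring R, the following are equivalent: (1) every h-ideal A of R is h-idempotent, i.e. cl(AA) = A; (2) A ∩ B = cl(AB) for every pair of h-ideals A, B of R. -/
open Pointwise

lemma hCl_mono {R : Type*} [NonUnitalSemiring R] {A B : Set R} (h : A ⊆ B) :
    hCl A ⊆ hCl B := by
  rintro x ⟨a, ha, b, hb, y, hxy⟩
  exact ⟨a, h ha, b, h hb, y, hxy⟩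

lemma hCl_eq {R : Type*} [NonUnitalSemiring R] {I : Set R} (hI : IsHIdeal I) :
    hCl I = I := by
  obtain ⟨hne, hadd, _, _, hh⟩ := hI
  ext x
  constructor
  · rintro ⟨a, ha, b, hb, y, hxy⟩
    exact hh a ha b hb x y hxy
  · intro hx
    exact ⟨x, hx, x + x, hadd x hx x hx, 0, by simp⟩

lemma inter_hIdeal {R : Type*} [NonUnitalSemiring R] {A B : Set R}
    (hA : IsHIdeal A) (hB : IsHIdeal B) : IsHIdeal (A ∩ B) := by
  obtain ⟨⟨a0, ha0⟩, hAadd, hAl, hAr, hAh⟩ := hA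
  obtain ⟨⟨b0, hb0⟩, hBadd, hBl, hBr, hBh⟩ := hB
  have h0A : (0 : R) ∈ A := hAh a0 ha0 a0 ha0 0 0 (by simp)
  have h0B : (0 : R) ∈ B := hBh b0 hb0 b0 hb0 0 0 (by simp)
  refine ⟨⟨0, h0A, h0B⟩, ?_, ?_, ?_, ?_⟩
  · exact fun a ha b hb => ⟨hAadd a ha.1 b hb.1, hBadd a ha.2 b hb.2⟩
  · exact fun r a ha => ⟨hAl r a ha.1, hBl r a ha.2⟩
  · exact fun r a ha => ⟨hAr r a ha.1, hBr r a ha.2⟩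
  · exact fun a ha b hb x y hxy =>
      ⟨hAh a ha.1 b hb.1 x y hxy, hBh a ha.2 b hb.2 x y hxy⟩

lemma mul_subset_inter {R : Type*} [NonUnitalSemiring R] {A B : Set R}
    (hA : IsHIdeal A) (hB : IsHIdeal B) : A * B ⊆ A ∩ B := by
  rintro x hx
  rw [Set.mem_mul] at hx
  obtain ⟨a, ha, b, hb, rfl⟩ := hx
  exact ⟨hA.2.2.2.1 b a ha, hB.2.2.1 a b hb⟩

theorem stmt_9 {R : Type*} [NonUnitalSemiring R] :
    (∀ A : Set R, IsHIdeal A → hCl (A * A) = A) ↔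
      (∀ A B : Set R, IsHIdeal A → IsHIdeal B → A ∩ B = hCl (A * B)) := by
  constructor
  · intro h A B hA hB
    have hAB : IsHIdeal (A ∩ B) := inter_hIdeal hA hB
    apply Set.Subset.antisymm
    · have h1 : A ∩ B ⊆ hCl ((A ∩ B) * (A ∩ B)) := (h _ hAB).symm.subset
      refine h1.trans (hCl_mono ?_)
      exact Set.mul_subset_mul Set.inter_subset_left Set.inter_subset_right
    · calc hCl (A * B) ⊆ hCl (A ∩ B) := hCl_mono (mul_subset_inter hA hB)
        _ = A ∩ B := hCl_eq hAB
  · intro h A hA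
    have := h A A hA hA
    rw [Set.inter_self] at this
    exact this.symm
end

section
/- In a hemiring R, every fuzzy h-ideal of R is idempotent (λ ⊙_h λ = λ) if and only if λ ⊙_h μ = min(λ,μ) for all fuzzy h-ideals λ, μ of R. -/
open Pointwise

/-!
A fuzzy h-ideal dominates every term of the supremum defining `λ ⊙_h μ` at `x`: it is closed
under finite sums, absorbs products and is h-closed, so `λ ⊙_h μ ≤ min λ μ`. Conversely
`min λ μ` is itself a fuzzy h-ideal, so if it is idempotent then monotonicity of `⊙_h` gives
`min λ μ = (min λ μ) ⊙_h (min λ μ) ≤ λ ⊙_h μ`. Taking `μ = λ` gives the other implication.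
-/

theorem inf'_le_apply_sum {α R ι : Type*} [LinearOrder α] [AddCommMonoid R] {nu : R → α}
    (hadd : ∀ a b, min (nu a) (nu b) ≤ nu (a + b)) (s : Finset ι) (hs : s.Nonempty)
    (f : ι → R) : s.inf' hs (fun i => nu (f i)) ≤ nu (∑ i ∈ s, f i) :=
  Finset.sum_induction_nonempty f (fun y => s.inf' hs (fun i => nu (f i)) ≤ nu y)
    (fun a b ha hb => (le_min ha hb).trans (hadd a b)) hs (fun _ hi => Finset.inf'_le _ hi)

section HIntrinsicProd

variable {R : Type*} [NonUnitalSemiring R]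

def hProdValues (lam mu : R → ℝ) (x : R) : Set ℝ :=
  {0} ∪ {v : ℝ | ∃ (m n : ℕ) (a b : Fin (m + 1) → R) (c d : Fin (n + 1) → R)
    (z : R), x + (∑ i, a i * b i) + z = (∑ j, c j * d j) + z ∧
      v = min (Finset.univ.inf' Finset.univ_nonempty (fun i => min (lam (a i)) (mu (b i))))
              (Finset.univ.inf' Finset.univ_nonempty (fun j => min (lam (c j)) (mu (d j))))}

theorem bddAbove_hProdValues {lam : R → ℝ} (hlam : ∀ x, lam x ≤ 1) (mu : R → ℝ) (x : R) :
    BddAbove (hProdValues lam mu x) := by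
  refine ⟨1, ?_⟩
  rintro _ (rfl | ⟨m, n, a, b, c, d, z, -, rfl⟩)
  · exact zero_le_one
  · exact (min_le_left _ _).trans <| (Finset.inf'_le _ (Finset.mem_univ 0)).trans <|
      (min_le_left _ _).trans (hlam _)

theorem hIntrinsicProd_mono {lam mu lam' mu' : R → ℝ} (hlam : ∀ x, lam x ≤ 1)
    (hl : lam' ≤ lam) (hm : mu' ≤ mu) : hIntrinsicProd lam' mu' ≤ hIntrinsicProd lam mu := by
  intro x
  have hbdd := bddAbove_hProdValues hlam mu x
  refine csSup_le ⟨0, Or.inl rfl⟩ ?_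
  rintro _ (rfl | ⟨m, n, a, b, c, d, z, hx, rfl⟩)
  · exact le_csSup hbdd (Or.inl rfl)
  · refine le_trans ?_ (le_csSup hbdd (Or.inr ⟨m, n, a, b, c, d, z, hx, rfl⟩))
    gcongr with i _ j _ <;> apply_assumption

theorem hIntrinsicProd_le {lam mu nu : R → ℝ} {x : R} (hx0 : 0 ≤ nu x)
    (hadd : ∀ a b, min (nu a) (nu b) ≤ nu (a + b))
    (hmul : ∀ a b, min (lam a) (mu b) ≤ nu (a * b))
    (hcl : ∀ a b w y, w + a + y = b + y → min (nu a) (nu b) ≤ nu w) :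
    hIntrinsicProd lam mu x ≤ nu x := by
  refine csSup_le ⟨0, Or.inl rfl⟩ ?_
  rintro _ (rfl | ⟨m, n, a, b, c, d, z, hx, rfl⟩)
  · exact hx0
  have hsum : ∀ (k : ℕ) (p q : Fin (k + 1) → R),
      Finset.univ.inf' Finset.univ_nonempty (fun i => min (lam (p i)) (mu (q i))) ≤
        nu (∑ i, p i * q i) := fun k p q => by
    refine le_trans ?_ (inf'_le_apply_sum hadd _ Finset.univ_nonempty _)
    gcongr with i _
    exact hmul _ _
  exact (min_le_min (hsum m a b) (hsum n c d)).trans (hcl _ _ _ _ hx)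

theorem IsFuzzyHIdeal.isFuzzyLeftHIdeal {lam : R → ℝ} (hl : IsFuzzyHIdeal lam) :
    IsFuzzyLeftHIdeal lam :=
  ⟨hl.1, hl.2.1, fun a b => (le_max_right _ _).trans (hl.2.2.1 a b), hl.2.2.2⟩

theorem hIntrinsicProd_le_left {lam : R → ℝ} (hl : IsFuzzyHIdeal lam) (mu : R → ℝ) :
    hIntrinsicProd lam mu ≤ lam := fun x =>
  hIntrinsicProd_le (hl.1 x).1 hl.2.1
    (fun a b => (min_le_left _ _).trans <| (le_max_left _ _).trans (hl.2.2.1 a b)) hl.2.2.2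

theorem hIntrinsicProd_le_right (lam : R → ℝ) {mu : R → ℝ} (hm : IsFuzzyLeftHIdeal mu) :
    hIntrinsicProd lam mu ≤ mu := fun x =>
  hIntrinsicProd_le (hm.1 x).1 hm.2.1 (fun a b => (min_le_right _ _).trans (hm.2.2.1 a b))
    hm.2.2.2

theorem IsFuzzyHIdeal.min {lam mu : R → ℝ} (hl : IsFuzzyHIdeal lam) (hm : IsFuzzyHIdeal mu) :
    IsFuzzyHIdeal (fun x => min (lam x) (mu x)) := by
  obtain ⟨hl01, hladd, hlmul, hlcl⟩ := hl
  obtain ⟨hm01, hmadd, hmmul, hmcl⟩ := hm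
  refine ⟨fun x => ⟨le_min (hl01 x).1 (hm01 x).1, (min_le_left _ _).trans (hl01 x).2⟩,
    fun a b => ?_, fun a b => ?_, fun a b x y h => ?_⟩
  · rw [min_min_min_comm]
    exact min_le_min (hladd a b) (hmadd a b)
  · exact max_le (min_le_min ((le_max_left _ _).trans (hlmul a b))
        ((le_max_left _ _).trans (hmmul a b)))
      (min_le_min ((le_max_right _ _).trans (hlmul a b)) ((le_max_right _ _).trans (hmmul a b)))
  · rw [min_min_min_comm]
    exact min_le_min (hlcl a b x y h) (hmcl a b x y h)

end HIntrinsicProd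

theorem stmt_11 {R : Type*} [NonUnitalSemiring R] :
    (∀ lam : R → ℝ, IsFuzzyHIdeal lam → hIntrinsicProd lam lam = lam) ↔
      (∀ lam mu : R → ℝ, IsFuzzyHIdeal lam → IsFuzzyHIdeal mu →
        hIntrinsicProd lam mu = fun x => min (lam x) (mu x)) := by
  constructor
  · intro hidem lam mu hl hm
    refine le_antisymm (fun x => le_min (hIntrinsicProd_le_left hl mu x)
      (hIntrinsicProd_le_right lam hm.isFuzzyLeftHIdeal x)) ?_
    calc (fun x => min (lam x) (mu x))
        = hIntrinsicProd (fun x => min (lam x) (mu x)) (fun x => min (lam x) (mu x)) :=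
          (hidem _ (hl.min hm)).symm
      _ ≤ hIntrinsicProd lam mu :=
          hIntrinsicProd_mono (fun x => (hl.1 x).2) (fun x => min_le_left _ _)
            (fun x => min_le_right _ _)
  · intro hmin lam hl
    simpa using hmin lam lam hl hl
end

section
/- If every h-ideal of a hemiring R is h-idempotent, then the lattice of h-ideals of R (ordered by inclusion, with meet A ∩ B and join cl(A+B)) is a distributive lattice; in fact it is Brouwerian: for any h-ideals A, B, the set {I : I an h-ideal, A ∩ I ⊆ B} has a greatest element. -/
open Pointwise

/-! In a hemiring without additive inverses, `x + a + y = b + y` plays the role of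
`x = b - a`. For an h-idempotent h-ideal `A` and any h-ideal `I`, `A ∩ I = cl((A ∩ I)(A ∩ I))`
lies in `cl(A I)`, so membership in `A ∩ I` is controlled by products `a x` with `a ∈ A`.
For distributivity, `a (b + c) = a b + a c` puts `A · cl(B + C)` inside `cl(A ∩ B + A ∩ C)`.
For the pseudocomplement, the join `M` of all h-ideals `I` with `A ∩ I ⊆ B` satisfies
`A M ⊆ cl B = B`, hence `A ∩ M ⊆ B`. -/

section Hemiring

variable {R : Type*} [NonUnitalSemiring R]

/-- An ideal of a hemiring, with no closure condition. -/
structure IsHemiringIdeal (S : Set R) : Prop where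
  nonempty : S.Nonempty
  add_mem : ∀ {a b : R}, a ∈ S → b ∈ S → a + b ∈ S
  mul_mem_left : ∀ (r : R) {a : R}, a ∈ S → r * a ∈ S
  mul_mem_right : ∀ (r : R) {a : R}, a ∈ S → a * r ∈ S

namespace IsHIdeal

variable {I J : Set R}

theorem toIsHemiringIdeal (hI : IsHIdeal I) : IsHemiringIdeal I :=
  ⟨hI.1, fun ha hb => hI.2.1 _ ha _ hb, fun r _ ha => hI.2.2.1 r _ ha,
    fun r _ ha => hI.2.2.2.1 r _ ha⟩

theorem mem_of_add_add_eq (hI : IsHIdeal I) {a b x y : R} (ha : a ∈ I) (hb : b ∈ I)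
    (h : x + a + y = b + y) : x ∈ I :=
  hI.2.2.2.2 a ha b hb x y h

theorem zero_mem (hI : IsHIdeal I) : (0 : R) ∈ I :=
  let ⟨a, ha⟩ := hI.1
  hI.mem_of_add_add_eq (y := 0) ha ha (by rw [zero_add])

theorem hCl_subset (hI : IsHIdeal I) {S : Set R} (hS : S ⊆ I) : hCl S ⊆ I :=
  fun _ ⟨_, ha, _, hb, _, h⟩ => hI.mem_of_add_add_eq (hS ha) (hS hb) h

theorem inter (hI : IsHIdeal I) (hJ : IsHIdeal J) : IsHIdeal (I ∩ J) :=
  ⟨⟨0, hI.zero_mem, hJ.zero_mem⟩,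
    fun _ ha _ hb => ⟨hI.2.1 _ ha.1 _ hb.1, hJ.2.1 _ ha.2 _ hb.2⟩,
    fun r _ ha => ⟨hI.2.2.1 r _ ha.1, hJ.2.2.1 r _ ha.2⟩,
    fun r _ ha => ⟨hI.2.2.2.1 r _ ha.1, hJ.2.2.2.1 r _ ha.2⟩,
    fun _ ha _ hb _ _ h => ⟨hI.mem_of_add_add_eq ha.1 hb.1 h, hJ.mem_of_add_add_eq ha.2 hb.2 h⟩⟩

end IsHIdeal

theorem hCl_mono_s12 {S T : Set R} (h : S ⊆ T) : hCl S ⊆ hCl T :=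
  fun _ ⟨a, ha, b, hb, y, hy⟩ => ⟨a, h ha, b, h hb, y, hy⟩

theorem subset_hCl {S : Set R} (hS : ∀ {a b : R}, a ∈ S → b ∈ S → a + b ∈ S) :
    S ⊆ hCl S :=
  fun s hs => ⟨s, hs, s + s, hS hs hs, 0, rfl⟩

theorem mul_left_mem_hCl {S T : Set R} {a x : R} (hST : ∀ s ∈ S, a * s ∈ T)
    (hx : x ∈ hCl S) : a * x ∈ hCl T := by
  obtain ⟨s₁, hs₁, s₂, hs₂, y, hy⟩ := hx
  exact ⟨a * s₁, hST s₁ hs₁, a * s₂, hST s₂ hs₂, a * y, by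
    simpa only [mul_add] using congrArg (a * ·) hy⟩

theorem mul_right_mem_hCl {S T : Set R} {a x : R} (hST : ∀ s ∈ S, s * a ∈ T)
    (hx : x ∈ hCl S) : x * a ∈ hCl T := by
  obtain ⟨s₁, hs₁, s₂, hs₂, y, hy⟩ := hx
  exact ⟨s₁ * a, hST s₁ hs₁, s₂ * a, hST s₂ hs₂, y * a, by
    simpa only [add_mul] using congrArg (· * a) hy⟩

namespace IsHemiringIdeal

variable {S T : Set R}

theorem add (hS : IsHemiringIdeal S) (hT : IsHemiringIdeal T) : IsHemiringIdeal (S + T) where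
  nonempty := hS.nonempty.add hT.nonempty
  add_mem := by
    rintro _ _ ⟨s₁, hs₁, t₁, ht₁, rfl⟩ ⟨s₂, hs₂, t₂, ht₂, rfl⟩
    exact ⟨s₁ + s₂, hS.add_mem hs₁ hs₂, t₁ + t₂, hT.add_mem ht₁ ht₂, add_add_add_comm ..⟩
  mul_mem_left := by
    rintro r _ ⟨s, hs, t, ht, rfl⟩
    exact ⟨r * s, hS.mul_mem_left r hs, r * t, hT.mul_mem_left r ht, (mul_add ..).symm⟩
  mul_mem_right := by
    rintro r _ ⟨s, hs, t, ht, rfl⟩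
    exact ⟨s * r, hS.mul_mem_right r hs, t * r, hT.mul_mem_right r ht, (add_mul ..).symm⟩

theorem isHIdeal_hCl (hS : IsHemiringIdeal S) : IsHIdeal (hCl S) := by
  refine ⟨hS.nonempty.mono (subset_hCl hS.add_mem), ?_,
    fun r _ hx => mul_left_mem_hCl (fun _ hs => hS.mul_mem_left r hs) hx,
    fun r _ hx => mul_right_mem_hCl (fun _ hs => hS.mul_mem_right r hs) hx, ?_⟩
  · rintro x₁ ⟨a₁, ha₁, b₁, hb₁, y₁, hy₁⟩ x₂ ⟨a₂, ha₂, b₂, hb₂, y₂, hy₂⟩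
    refine ⟨a₁ + a₂, hS.add_mem ha₁ ha₂, b₁ + b₂, hS.add_mem hb₁ hb₂, y₁ + y₂, ?_⟩
    calc x₁ + x₂ + (a₁ + a₂) + (y₁ + y₂)
        = (x₁ + a₁ + y₁) + (x₂ + a₂ + y₂) := by abel
      _ = b₁ + b₂ + (y₁ + y₂) := by rw [hy₁, hy₂]; abel
  · rintro u ⟨a₁, ha₁, b₁, hb₁, y₁, hy₁⟩ v ⟨a₂, ha₂, b₂, hb₂, y₂, hy₂⟩ x y h
    refine ⟨b₁ + a₂, hS.add_mem hb₁ ha₂, b₂ + a₁, hS.add_mem hb₂ ha₁, y₁ + y + y₂, ?_⟩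
    calc x + (b₁ + a₂) + (y₁ + y + y₂)
        = (b₁ + y₁) + (x + a₂ + y + y₂) := by abel
      _ = (x + u + y) + (a₁ + y₁ + a₂ + y₂) := by rw [← hy₁]; abel
      _ = (v + a₂ + y₂) + (y + a₁ + y₁) := by rw [h]; abel
      _ = (b₂ + a₁) + (y₁ + y + y₂) := by rw [hy₂]; abel

theorem closure_sUnion {𝒮 : Set (Set R)} (h𝒮 : ∀ I ∈ 𝒮, IsHemiringIdeal I) :
    IsHemiringIdeal (AddSubmonoid.closure (⋃₀ 𝒮) : Set R) where
  nonempty := ⟨0, AddSubmonoid.zero_mem _⟩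
  add_mem := AddSubmonoid.add_mem _
  mul_mem_left r a ha := by
    induction ha using AddSubmonoid.closure_induction with
    | mem x hx =>
      obtain ⟨I, hI, hxI⟩ := hx
      exact AddSubmonoid.subset_closure ⟨I, hI, (h𝒮 I hI).mul_mem_left r hxI⟩
    | zero => rw [mul_zero]; exact AddSubmonoid.zero_mem _
    | add x y _ _ hx hy => rw [mul_add]; exact AddSubmonoid.add_mem _ hx hy
  mul_mem_right r a ha := by
    induction ha using AddSubmonoid.closure_induction with
    | mem x hx =>
      obtain ⟨I, hI, hxI⟩ := hx
      exact AddSubmonoid.subset_closure ⟨I, hI, (h𝒮 I hI).mul_mem_right r hxI⟩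
    | zero => rw [zero_mul]; exact AddSubmonoid.zero_mem _
    | add x y _ _ hx hy => rw [add_mul]; exact AddSubmonoid.add_mem _ hx hy

end IsHemiringIdeal

section HIdempotent

variable (hidem : ∀ A : Set R, IsHIdeal A → hCl (A * A) = A)
include hidem

theorem inter_subset_hCl_mul {A B : Set R} (hA : IsHIdeal A) (hB : IsHIdeal B) :
    A ∩ B ⊆ hCl (A * B) := by
  rw [← hidem _ (hA.inter hB)]
  exact hCl_mono_s12 (Set.mul_subset_mul Set.inter_subset_left Set.inter_subset_right)

theorem inter_hCl_add_eq {A B C : Set R} (hA : IsHIdeal A) (hB : IsHIdeal B)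
    (hC : IsHIdeal C) : A ∩ hCl (B + C) = hCl (A ∩ B + A ∩ C) := by
  have hAB := (hA.inter hB).toIsHemiringIdeal
  have hAC := (hA.inter hC).toIsHemiringIdeal
  have hA' := hA.toIsHemiringIdeal
  have hBC := hB.toIsHemiringIdeal.add hC.toIsHemiringIdeal
  apply Set.Subset.antisymm
  · have hmul : A * hCl (B + C) ⊆ hCl (A ∩ B + A ∩ C) := by
      rintro _ ⟨a, ha, x, hx, rfl⟩
      refine mul_left_mem_hCl ?_ hx
      rintro _ ⟨b, hb, c, hc, rfl⟩
      exact ⟨a * b, ⟨hA'.mul_mem_right b ha, hB.toIsHemiringIdeal.mul_mem_left a hb⟩,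
        a * c, ⟨hA'.mul_mem_right c ha, hC.toIsHemiringIdeal.mul_mem_left a hc⟩,
        (mul_add ..).symm⟩
    have hT := (hAB.add hAC).isHIdeal_hCl
    exact (inter_subset_hCl_mul hidem hA hBC.isHIdeal_hCl).trans (hT.hCl_subset hmul)
  · refine (hA.inter hBC.isHIdeal_hCl).hCl_subset ?_
    rintro _ ⟨p, hp, q, hq, rfl⟩
    exact ⟨hA'.add_mem hp.1 hq.1, subset_hCl hBC.add_mem ⟨p, hp.2, q, hq.2, rfl⟩⟩

theorem exists_greatest_inter_subset {A B : Set R} (hA : IsHIdeal A) (hB : IsHIdeal B) :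
    ∃ M : Set R, IsHIdeal M ∧ A ∩ M ⊆ B ∧ ∀ I : Set R, IsHIdeal I → A ∩ I ⊆ B → I ⊆ M := by
  set 𝒮 : Set (Set R) := {I | IsHIdeal I ∧ A ∩ I ⊆ B}
  set U : Set R := (AddSubmonoid.closure (⋃₀ 𝒮) : Set R)
  have hU : IsHemiringIdeal U :=
    IsHemiringIdeal.closure_sUnion fun I hI => hI.1.toIsHemiringIdeal
  have hAU : ∀ a ∈ A, ∀ u ∈ U, a * u ∈ B := by
    intro a ha u hu
    induction hu using AddSubmonoid.closure_induction with
    | mem x hx =>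
      obtain ⟨I, ⟨hI, hAI⟩, hxI⟩ := hx
      exact hAI ⟨hA.toIsHemiringIdeal.mul_mem_right x ha, hI.toIsHemiringIdeal.mul_mem_left a hxI⟩
    | zero => simpa only [mul_zero] using hB.zero_mem
    | add x y _ _ hx hy => simpa only [mul_add] using hB.toIsHemiringIdeal.add_mem hx hy
  refine ⟨hCl U, hU.isHIdeal_hCl, ?_, fun I hI hAI => ?_⟩
  · refine (inter_subset_hCl_mul hidem hA hU.isHIdeal_hCl).trans (hB.hCl_subset ?_)
    rintro _ ⟨a, ha, x, hx, rfl⟩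
    exact hB.hCl_subset subset_rfl (mul_left_mem_hCl (hAU a ha) hx)
  · exact fun x hx => subset_hCl hU.add_mem (AddSubmonoid.subset_closure ⟨I, ⟨hI, hAI⟩, hx⟩)

end HIdempotent

end Hemiring

theorem stmt_12 {R : Type*} [NonUnitalSemiring R]
    (hidem : ∀ A : Set R, IsHIdeal A → hCl (A * A) = A) :
    (∀ A B C : Set R, IsHIdeal A → IsHIdeal B → IsHIdeal C →
      A ∩ hCl (B + C) = hCl ((A ∩ B) + (A ∩ C))) ∧
    (∀ A B : Set R, IsHIdeal A → IsHIdeal B →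
      ∃ M : Set R, IsHIdeal M ∧ A ∩ M ⊆ B ∧
        ∀ I : Set R, IsHIdeal I → A ∩ I ⊆ B → I ⊆ M) :=
  ⟨fun _ _ _ hA hB hC => inter_hCl_add_eq hidem hA hB hC,
    fun _ _ hA hB => exists_greatest_inter_subset hidem hA hB⟩
end

section
/- A non-constant fuzzy h-ideal δ of a hemiring R is prime in the second sense (for all t ∈ [0,1] and a, b ∈ R: δ(axb) ≥ t for all x ∈ R implies δ(a) ≥ t or δ(b) ≥ t) if and only if every proper level set U(δ;t) (non-empty and ≠ R) is a prime h-ideal of R. -/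
open Pointwise

theorem stmt_15 {R : Type*} [NonUnitalSemiring R] (δ : R → ℝ)
    (hδ : IsFuzzyHIdeal δ) (hnc : ∃ x y : R, δ x ≠ δ y) :
    (∀ t : ℝ, 0 ≤ t → t ≤ 1 → ∀ a b : R,
        (∀ x : R, t ≤ δ (a * x * b)) → t ≤ δ a ∨ t ≤ δ b) ↔
      (∀ t : ℝ, 0 ≤ t → t ≤ 1 →
        ({x : R | t ≤ δ x}).Nonempty → {x : R | t ≤ δ x} ≠ Set.univ →
          IsHIdeal {x : R | t ≤ δ x} ∧
          ∀ a b : R, (∀ x : R, a * x * b ∈ {x : R | t ≤ δ x}) →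
            a ∈ {x : R | t ≤ δ x} ∨ b ∈ {x : R | t ≤ δ x}) := by
  obtain ⟨hb, hadd, hmul, hhcl⟩ := hδ
  constructor
  · intro H t ht0 ht1 hne hproper
    constructor
    · refine ⟨hne, ?_, ?_, ?_, ?_⟩
      · intro a ha b hb'
        exact le_trans (le_min ha hb') (hadd a b)
      · intro r a ha
        exact le_trans (le_trans ha (le_max_right (δ r) (δ a))) (hmul r a)
      · intro r a ha
        exact le_trans (le_trans ha (le_max_left (δ a) (δ r))) (hmul a r)
      · intro a ha b hb' x y hxy
        exact le_trans (le_min ha hb') (hhcl a b x y hxy)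
    · intro a b hab
      exact H t ht0 ht1 a b hab
  · intro H t ht0 ht1 a b hab
    by_cases huniv : {x : R | t ≤ δ x} = Set.univ
    · left
      have : a ∈ {x : R | t ≤ δ x} := huniv ▸ Set.mem_univ a
      exact this
    · exact (H t ht0 ht1 ⟨a * a * b, hab a⟩ huniv).2 a b hab
end

section
/- Let R be a commutative hemiring with identity. A non-constant fuzzy h-ideal δ of R is prime (in the second sense) if and only if δ(ab) = max(δ(a), δ(b)) for all a, b ∈ R. -/
open Pointwise

theorem stmt_16 {R : Type*} [CommSemiring R] (δ : R → ℝ)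
    (hδ : IsFuzzyHIdeal δ) (hnc : ∃ x y : R, δ x ≠ δ y) :
    (∀ t : ℝ, 0 ≤ t → t ≤ 1 → ∀ a b : R,
        (∀ x : R, t ≤ δ (a * x * b)) → t ≤ δ a ∨ t ≤ δ b) ↔
      (∀ a b : R, δ (a * b) = max (δ a) (δ b)) := by
  obtain ⟨hb, _, hmul, _⟩ := hδ
  constructor
  · intro h a b
    refine le_antisymm ?_ (hmul a b)
    have := h (δ (a*b)) (hb _).1 (hb _).2 a b (fun x => by
      have : a * x * b = (a * b) * x := by ring
      rw [this]
      exact le_trans (le_max_left _ _) (hmul _ _))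
    rcases this with h1 | h1
    · exact le_max_of_le_left h1
    · exact le_max_of_le_right h1
  · intro h t _ _ a b hx
    have := hx 1
    rw [mul_one, h a b] at this
    exact le_max_iff.mp this
end
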